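/- arXiv:2103.12239 — 3 statements merged into one kernel-verified Lean document; each statement's English description precedes it below -/
import Mathlib

section
/- (The avoidance control dominates the LOS rate in the conflict region) Suppose x_5 − x_2 ≥ 0 (so α_0 = 1), x_1 ≤ −β/γ, |x_5 − x_2| ≤ π, k ≥ 0, x_6 > 0, x_6 + V_o,max > 0, and r + (x_6 + V_o,max)·Δ_t(x) > 0. Then α_1 ≥ 0, α_2 > 0, and u_ca − x_3 ≥ (γ²/β)·x_1² ≥ β. Consequently, for any tracking command u_tr with |u_tr| < β, the total heading-rate command u = u_ca + u_tr satisfies u > x_3. -/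
/-- **The avoidance control dominates the LOS rate in the conflict region.**
Suppose `x_5 − x_2 ≥ 0` (so `α_0 = 1`), `x_1 ≤ −β/γ`, `|x_5 − x_2| ≤ π`, `k ≥ 0`,
`x_6 > 0`, `x_6 + V_o,max > 0`, and `r + (x_6 + V_o,max)·Δ_t > 0`.
Then `α_1 ≥ 0`, `α_2 > 0`, and `u_ca − x_3 ≥ (γ²/β)·x_1² ≥ β`.  Consequently, for
any tracking command `u_tr` with `|u_tr| < β`, the total heading-rate command
`u = u_ca + u_tr` satisfies `u > x_3`. -/
theorem avoidance_dominates_los_rate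
    (τsafe r β γ ω k Vomax : ℝ)
    (x1 x2 x3 x5 x6 ar Δt α1 α2 uca : ℝ)
    (hτ : 0 < τsafe) (hr : 0 < r) (hβ : 0 < β) (hγ : γ = τsafe * β + Real.pi)
    (hω : 0 < ω) (hVomax : 0 < Vomax)
    (hd0 : x5 - x2 ≥ 0)
    (hx1 : x1 ≤ -β / γ)
    (hdπ : |x5 - x2| ≤ Real.pi)
    (hk : k ≥ 0)
    (hx6 : 0 < x6)
    (hx6V : 0 < x6 + Vomax)
    (hΔt : Δt = (Real.pi - |x5 - x2|) / β)
    (hden : 0 < r + (x6 + Vomax) * Δt)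
    (hα1 : α1 = (k * x1 ^ 2 + x6 * max 0 (-x3 * Real.sin (x5 - x2))
                  - min 0 (-ar * Real.cos (x5 - x2))) / (r + (x6 + Vomax) * Δt))
    (hα2 : α2 = -2 * β * ω * x1 / (x6 + Vomax))
    (huca : uca = γ ^ 2 / β * (x1 ^ 2 + α1) + α2 + x3) :
    α1 ≥ 0 ∧ α2 > 0 ∧ uca - x3 ≥ γ ^ 2 / β * x1 ^ 2 ∧ γ ^ 2 / β * x1 ^ 2 ≥ β ∧
      ∀ utr : ℝ, |utr| < β → uca + utr > x3 := by
  have hγpos : 0 < γ := by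
    rw [hγ]; positivity
  rw [neg_div] at hx1
  have hx1neg : x1 < 0 := lt_of_le_of_lt hx1 (by
    have : 0 < β / γ := div_pos hβ hγpos
    linarith)
  have hα1' : α1 ≥ 0 := by
    rw [hα1]
    apply div_nonneg _ hden.le
    have h1 : 0 ≤ k * x1 ^ 2 := by positivity
    have h2 : 0 ≤ x6 * max 0 (-x3 * Real.sin (x5 - x2)) :=
      mul_nonneg hx6.le (le_max_left _ _)
    have h3 : min 0 (-ar * Real.cos (x5 - x2)) ≤ 0 := min_le_left _ _
    linarith
  have hα2' : α2 > 0 := by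
    rw [hα2]
    apply div_pos _ hx6V
    nlinarith [mul_pos (mul_pos hβ hω) (neg_pos.mpr hx1neg)]
  have hsq : γ ^ 2 / β * x1 ^ 2 ≥ β := by
    have h1 : (-x1) ≥ β / γ := by linarith
    have h2 : x1 ^ 2 ≥ (β / γ) ^ 2 := by nlinarith [div_pos hβ hγpos]
    have h3 : γ ^ 2 / β * (β / γ) ^ 2 = β := by
      field_simp
    calc γ ^ 2 / β * x1 ^ 2 ≥ γ ^ 2 / β * (β / γ) ^ 2 := by
          apply mul_le_mul_of_nonneg_left h2 (by positivity)
      _ = β := h3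
  have hmain : uca - x3 ≥ γ ^ 2 / β * x1 ^ 2 := by
    rw [huca]
    have : γ ^ 2 / β * α1 ≥ 0 := mul_nonneg (by positivity) hα1'
    nlinarith
  refine ⟨hα1', hα2', hmain, hsq, fun utr hutr => ?_⟩
  have := abs_lt.mp hutr
  linarith
end

section
/- (Nonnegativity of Ȧ_2 under the avoidance controller; core computation of Theorem 1) Under the same parameter conditions and state constraints as in the Ȧ_1 lemma (in particular 0 < x_5 − x_2 ≤ π, Δ_t = (π − (x_5 − x_2))/β, x_4 > 0, 1/x_4 ≤ ω, x_1 ≤ −β/γ, V_r,min ≤ x_6 ≤ V_r,max, x_6 + V_o,max > 0, k ≥ 0, |u_tr| < β, |u_v| < β²ω/(γπ)), with u = u_ca + u_tr and u_ca the avoidance controller (with a_r = u_v), one has Ȧ_2 := x_1/x_4 + ((x_6 + V_o,max)/β)·(u − x_3) + u_v·Δ_t ≥ 0. -/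
set_option maxHeartbeats 1000000


/-- **Nonnegativity of `Ȧ₂` under the avoidance controller (core computation of
Theorem 1).**  Under the same parameter conditions and state constraints as in
the `Ȧ₁` lemma (in particular `0 < x_5 − x_2 ≤ π`, `Δ_t = (π − (x_5 − x_2))/β`,
`x_4 > 0`, `1/x_4 ≤ ω`, `x_1 ≤ −β/γ`, `V_r,min ≤ x_6 ≤ V_r,max`,
`x_6 + V_o,max > 0`, `k ≥ 0`, `|u_tr| < β`, `|u_v| < β²ω/(γπ)`), with
`u = u_ca + u_tr` and `u_ca` the avoidance controller (with `a_r = u_v`), one has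
`Ȧ₂ = x_1/x_4 + ((x_6 + V_o,max)/β)·(u − x_3) + u_v·Δ_t ≥ 0`. -/
theorem A2dot_nonneg
    (τsafe r β γ ω k Vrmin Vrmax Vomax ψdomax aomax : ℝ)
    (x1 x2 x3 x4 x5 x6 Vo ψo ψdo ao utr uv Δt α1 α2 uca u : ℝ)
    -- design parameters
    (hτ : 0 < τsafe) (hr : 0 < r) (hβ : 0 < β) (hγ : γ = τsafe * β + Real.pi)
    (hVrmin : 0 < Vrmin) (hVr : Vrmin ≤ Vrmax) (hVomax : 0 < Vomax)
    (hψdomax : 0 < ψdomax) (haomax : 0 < aomax)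
    (hω : ω > r + (Vrmax + Vomax) * Real.pi / β)
    (hk : k ≥ (γ / β) ^ 2 * (Vomax * ψdomax + aomax))
    -- state constraints (conflict region, `x_5 − x_2 > 0`)
    (hd0 : 0 < x5 - x2) (hdπ : x5 - x2 ≤ Real.pi)
    (hΔt : Δt = (Real.pi - (x5 - x2)) / β)
    (hx4 : 0 < x4)
    (hx4lo : r + (x6 + Vomax) * Δt < 1 / x4) (hx4hi : 1 / x4 ≤ ω)
    (hx1lo : -1 / (τsafe + Δt) < x1) (hx1hi : x1 ≤ -β / γ)
    (hx6lo : Vrmin ≤ x6) (hx6hi : x6 ≤ Vrmax)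
    (hVo0 : 0 ≤ Vo) (hVo : Vo ≤ Vomax)
    (hψdo : |ψdo| ≤ ψdomax) (hao : |ao| ≤ aomax)
    (hx3 : x3 = x4 * (Vo * Real.sin (ψo - x2) - x6 * Real.sin (x5 - x2)))
    -- control bounds
    (hutr : |utr| < min (β ^ 2 * ω / (Vrmax * γ)) β)
    (huv : |uv| < β ^ 2 * ω / (γ * Real.pi))
    -- avoidance controller (with `a_r = u_v` and `α_0 = 1`)
    (hα1 : α1 = (k * x1 ^ 2 + x6 * max 0 (-x3 * Real.sin (x5 - x2))
                  - min 0 (-uv * Real.cos (x5 - x2))) / (r + (x6 + Vomax) * Δt))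
    (hα2 : α2 = -2 * β * ω * x1 / (x6 + Vomax))
    (huca : uca = γ ^ 2 / β * (x1 ^ 2 + α1) + α2 + x3)
    (hu : u = uca + utr) :
    x1 / x4 + (x6 + Vomax) / β * (u - x3) + uv * Δt ≥ 0 := by

  have hπ := Real.pi_pos
  have hS : 0 < x6 + Vomax := by linarith
  have hγpos : 0 < γ := by rw [hγ]; positivity
  have hγβ : 0 < γ / β := by positivity
  have hVrmax : 0 < Vrmax := lt_of_lt_of_le hVrmin hVr
  have hωpos : 0 < ω := by
    have : 0 < (Vrmax + Vomax) * Real.pi / β := by positivity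
    linarith
  have hΔt0 : 0 ≤ Δt := by
    rw [hΔt]; apply div_nonneg (by linarith) (le_of_lt hβ)
  have hΔtπ : Δt ≤ Real.pi / β := by
    rw [hΔt, div_le_div_iff₀ hβ hβ]
    have : 0 < Real.pi := Real.pi_pos
    nlinarith
  have hx1neg : x1 < 0 := lt_of_le_of_lt hx1hi (by
    rw [neg_div]; simpa using div_pos hβ hγpos)
  -- α1 ≥ 0
  have hD : 0 < r + (x6 + Vomax) * Δt := by positivity
  have hk0 : 0 ≤ k := le_trans (by positivity) hk
  have hα1nn : 0 ≤ α1 := by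
    rw [hα1]
    apply div_nonneg _ (le_of_lt hD)
    have h1 : 0 ≤ x6 * max 0 (-x3 * Real.sin (x5 - x2)) :=
      mul_nonneg (by linarith) (le_max_left _ _)
    have h2 : min 0 (-uv * Real.cos (x5 - x2)) ≤ 0 := min_le_left _ _
    have h3 : 0 ≤ k * x1 ^ 2 := mul_nonneg hk0 (sq_nonneg _)
    linarith
  -- rewrite the expression
  have hSne : (x6 + Vomax) ≠ 0 := ne_of_gt hS
  have hβne : β ≠ 0 := ne_of_gt hβ
  have hexpr : x1 / x4 + (x6 + Vomax) / β * (u - x3) + uv * Δt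
      = (x1 / x4 - 2 * ω * x1 + uv * Δt)
        + (γ ^ 2 / β ^ 2 * (x6 + Vomax) * x1 ^ 2 + (x6 + Vomax) / β * utr)
        + γ ^ 2 / β ^ 2 * (x6 + Vomax) * α1 := by
    rw [hu, huca, hα2]; field_simp; ring
  rw [hexpr]
  -- piece A
  have hA1 : ω * x1 ≤ x1 / x4 := by
    have := mul_le_mul_of_nonpos_right hx4hi (le_of_lt hx1neg)
    calc ω * x1 ≤ (1 / x4) * x1 := by linarith [this]
      _ = x1 / x4 := by ring
  have huv' : |uv| ≤ β ^ 2 * ω / (γ * Real.pi) := le_of_lt huv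
  have huvlo : -(β ^ 2 * ω / (γ * Real.pi)) ≤ uv := by
    have := abs_le.mp huv'; linarith [this.1]
  have huvΔt : uv * Δt ≥ -(β * ω / γ) := by
    have h1 : uv * Δt ≥ -(β ^ 2 * ω / (γ * Real.pi)) * Δt :=
      mul_le_mul_of_nonneg_right huvlo hΔt0
    have h2 : (β ^ 2 * ω / (γ * Real.pi)) * Δt ≤ (β ^ 2 * ω / (γ * Real.pi)) * (Real.pi / β) := by
      apply mul_le_mul_of_nonneg_left hΔtπ (by positivity)
    have h3 : (β ^ 2 * ω / (γ * Real.pi)) * (Real.pi / β) = β * ω / γ := by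
      field_simp
    linarith
  have hβγx1 : β / γ ≤ -x1 := by
    have h : β / γ = -(-β / γ) := by ring
    linarith [hx1hi]
  have hωx1 : -(ω * x1) ≥ β * ω / γ := by
    have h := mul_le_mul_of_nonneg_left hβγx1 (le_of_lt hωpos)
    have h4 : β * ω / γ = ω * (β / γ) := by ring
    have h5 : ω * -x1 = -(ω * x1) := by ring
    linarith
  have hA : 0 ≤ x1 / x4 - 2 * ω * x1 + uv * Δt := by linarith
  -- piece B
  have hx1sq : x1 ^ 2 ≥ (β / γ) ^ 2 := by
    have h := pow_le_pow_left₀ (by positivity : (0:ℝ) ≤ β / γ) hβγx1 2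
    have h2 : (-x1) ^ 2 = x1 ^ 2 := by ring
    linarith
  have hB : 0 ≤ γ ^ 2 / β ^ 2 * (x6 + Vomax) * x1 ^ 2 + (x6 + Vomax) / β * utr := by
    have hutrβ : -β ≤ utr := by
      have := abs_le.mp (le_of_lt (lt_of_lt_of_le hutr (min_le_right _ _)))
      linarith [this.1]
    have h1 : γ ^ 2 / β ^ 2 * (x6 + Vomax) * x1 ^ 2 ≥ γ ^ 2 / β ^ 2 * (x6 + Vomax) * (β / γ) ^ 2 := by
      apply mul_le_mul_of_nonneg_left hx1sq (by positivity)
    have h2 : γ ^ 2 / β ^ 2 * (x6 + Vomax) * (β / γ) ^ 2 = x6 + Vomax := by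
      field_simp
    have h3 : (x6 + Vomax) / β * utr ≥ (x6 + Vomax) / β * (-β) := by
      apply mul_le_mul_of_nonneg_left hutrβ (by positivity)
    have h4 : (x6 + Vomax) / β * (-β) = -(x6 + Vomax) := by
      field_simp
    linarith
  -- piece C
  have hC : 0 ≤ γ ^ 2 / β ^ 2 * (x6 + Vomax) * α1 := by positivity
  linarith
end

section
/- (Avoidance principle: nonnegative barrier derivative in the conflict region prevents entering the avoidance set) Let t_0 ∈ ℝ and let g : ℝ → ℝ be continuous on [t_0, ∞) and differentiable on (t_0, ∞). Suppose g(t_0) > 0 and that for every t > t_0, if 0 < g(t) < g(t_0) then g'(t) ≥ 0. Then g(t) > 0 for all t ≥ t_0. -/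
/-- **Avoidance principle: nonnegative barrier derivative in the conflict region
prevents entering the avoidance set.**
Let `g` be continuous on `[t₀, ∞)` and differentiable on `(t₀, ∞)`.  If
`g t₀ > 0` and `g' t ≥ 0` whenever `t > t₀` and `0 < g t < g t₀`, then
`g t > 0` for all `t ≥ t₀`. -/
theorem avoidance_principle
    (t0 : ℝ) (g : ℝ → ℝ)
    (hcont : ContinuousOn g (Set.Ici t0))
    (hdiff : DifferentiableOn ℝ g (Set.Ioi t0))
    (hinit : 0 < g t0)
    (hderiv : ∀ t, t0 < t → 0 < g t → g t < g t0 → 0 ≤ deriv g t) :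
    ∀ t, t0 ≤ t → 0 < g t := by
  intro t1 ht1
  by_contra hle
  push_neg at hle
  set c := g t0 with hc
  have hcK : ContinuousOn g (Set.Icc t0 t1) :=
    hcont.mono (Set.Icc_subset_Ici_self)
  -- first hitting time of 0
  set T : Set ℝ := Set.Icc t0 t1 ∩ g ⁻¹' Set.Iic 0 with hT
  have hTclosed : IsClosed T := hcK.preimage_isClosed_of_isClosed isClosed_Icc isClosed_Iic
  have hTcompact : IsCompact T := isCompact_Icc.of_isClosed_subset hTclosed Set.inter_subset_left
  have hTne : T.Nonempty := ⟨t1, ⟨ht1, le_refl t1⟩, hle⟩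
  obtain ⟨r, hrT⟩ : ∃ r, IsLeast T r := ⟨sInf T, hTcompact.isLeast_sInf hTne⟩
  obtain ⟨⟨⟨hrt0, hrt1⟩, hgr⟩, hrlb⟩ := hrT
  have hgr : g r ≤ 0 := hgr
  -- positivity before r
  have hpos : ∀ u, t0 ≤ u → u < r → 0 < g u := by
    intro u hu hur
    by_contra h
    push_neg at h
    exact absurd (hrlb ⟨⟨hu, hur.le.trans hrt1⟩, h⟩) (not_le.mpr hur)
  -- last time ≥ c/2 before r
  set S : Set ℝ := Set.Icc t0 r ∩ g ⁻¹' Set.Ici (c / 2) with hS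
  have hScont : ContinuousOn g (Set.Icc t0 r) :=
    hcont.mono (Set.Icc_subset_Ici_self)
  have hSclosed : IsClosed S := hScont.preimage_isClosed_of_isClosed isClosed_Icc isClosed_Ici
  have hScompact : IsCompact S := isCompact_Icc.of_isClosed_subset hSclosed Set.inter_subset_left
  have hSne : S.Nonempty := ⟨t0, ⟨le_refl t0, hrt0⟩, by simp; linarith⟩
  obtain ⟨s, hsS⟩ : ∃ s, IsGreatest S s := ⟨sSup S, hScompact.isGreatest_sSup hSne⟩
  obtain ⟨⟨⟨hst0, hsr⟩, hgs⟩, hsub⟩ := hsS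
  have hgs : c / 2 ≤ g s := hgs
  have hsr' : s < r := by
    rcases lt_or_eq_of_le hsr with h | h
    · exact h
    · exfalso; rw [h] at hgs; linarith
  -- between s and r, g < c/2
  have hsmall : ∀ u, s < u → u ≤ r → g u < c / 2 := by
    intro u hsu hur
    by_contra h
    push_neg at h
    exact absurd (hsub ⟨⟨hst0.trans hsu.le, hur⟩, h⟩) (not_le.mpr hsu)
  -- MVT on [s, r]
  obtain ⟨ξ, hξ, hξd⟩ := exists_deriv_eq_slope g hsr'
    (hcK.mono (Set.Icc_subset_Icc hst0 hrt1))
    (hdiff.mono (fun x hx => lt_of_le_of_lt hst0 hx.1))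
  have hξt0 : t0 < ξ := lt_of_le_of_lt hst0 hξ.1
  have hgξpos : 0 < g ξ := hpos ξ hξt0.le hξ.2
  have hgξlt : g ξ < c := lt_of_lt_of_le (hsmall ξ hξ.1 hξ.2.le) (by linarith)
  have h0 : 0 ≤ deriv g ξ := hderiv ξ hξt0 hgξpos hgξlt
  rw [hξd] at h0
  have hslope : (g r - g s) / (r - s) < 0 :=
    div_neg_of_neg_of_pos (by linarith) (by linarith)
  linarith
end
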